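/- arXiv:1402.4345 — 2 statements merged into one kernel-verified Lean document; each statement's English description precedes it below -/
import Mathlib

section
/- Let G be a finitely generated non-abelian group which has finite palindromic width with respect to a finite generating set X. Then there exists an element c ∈ G (possibly c = 1) and a finite list l whose entries lie in (X ∪ {c}) ∪ (X ∪ {c})⁻¹ such that the product of l equals 1 in G but the product of the reversed list l.reverse is not equal to 1 in G; in other words, G admits a relation q over the generating set X ∪ {c} whose reverse word q̄ is nontrivial in G. -/
open Function

section WreathDefs

variable (G A : Type*) [Group G] [Group A]

/-- The subgroup of finitely supported functions `A → G` (pointwise operations). -/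
def restrictedBase : Subgroup (A → G) where
  carrier := {f | (Function.mulSupport f).Finite}
  one_mem' := by simp [Function.mulSupport_one]
  mul_mem' := fun hf hg => (hf.union hg).subset (Function.mulSupport_mul _ _)
  inv_mem' := fun hf => by simpa [Function.mulSupport_inv] using hf

variable {G A}

lemma shift_mem (a : A) (f : restrictedBase G A) :
    (fun x => (f : A → G) (a * x)) ∈ restrictedBase G A := by
  have h : Function.mulSupport (fun x => (f : A → G) (a * x)) =
      (fun x : A => a * x) ⁻¹' Function.mulSupport (f : A → G) :=
    Function.mulSupport_comp_eq_preimage _ _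
  show (Function.mulSupport _).Finite
  rw [h]
  exact f.2.preimage (mul_right_injective a).injOn

/-- The translation automorphism of the restricted base, `(a • f) x = f (a⁻¹ * x)`. -/
noncomputable def shiftEquiv (a : A) : restrictedBase G A ≃* restrictedBase G A where
  toFun f := ⟨fun x => (f : A → G) (a⁻¹ * x), shift_mem a⁻¹ f⟩
  invFun f := ⟨fun x => (f : A → G) (a * x), shift_mem a f⟩
  left_inv f := by ext x; simp
  right_inv f := by ext x; simp
  map_mul' f g := by ext x; simp

variable (G A)

/-- The translation action of `A` on finitely supported functions `A → G`. -/
noncomputable def wreathAction : A →* MulAut (restrictedBase G A) where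
  toFun a := shiftEquiv a
  map_one' := by ext f x; simp [shiftEquiv]
  map_mul' a b := by ext f x; simp [shiftEquiv, mul_assoc]

/-- The restricted regular wreath product `G ≀ A`. -/
noncomputable abbrev Wreath := restrictedBase G A ⋊[wreathAction G A] A

variable {G A}

/-- The finitely supported function equal to `g` at `1` and trivial elsewhere. -/
noncomputable def atOne (g : G) : restrictedBase G A :=
  letI := Classical.decEq A
  ⟨fun x => if x = 1 then g else 1, by
    apply Set.Finite.subset (Set.finite_singleton (1 : A))
    intro x hx
    simp only [Function.mem_mulSupport] at hx
    by_contra hx1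
    exact hx (if_neg (by simpa using hx1))⟩

/-- The natural generating set of `G ≀ A` built from generating sets of the factors. -/
noncomputable def wreathGens (XB : Set G) (XA : Set A) : Set (Wreath G A) :=
  ((fun g => SemidirectProduct.inl (atOne g)) '' XB) ∪ (SemidirectProduct.inr '' XA)

end WreathDefs

section Palindromes

variable {W : Type*} [Group W]

/-- `g` is a palindrome with respect to `S`: it is the product of a word over `S`
(entries in `S ∪ S⁻¹`) which reads the same forwards and backwards. -/
def IsPalindrome (S : Set W) (g : W) : Prop :=
  ∃ l : List W, (∀ x ∈ l, x ∈ S ∪ S⁻¹) ∧ l.reverse = l ∧ l.prod = g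

/-- `g` is a product of at most `n` palindromes with respect to `S`. -/
def ProdOfPal (S : Set W) (n : ℕ) (g : W) : Prop :=
  ∃ l : List W, l.length ≤ n ∧ (∀ p ∈ l, IsPalindrome S p) ∧ l.prod = g

/-- The palindromic width of a group with respect to `S` (`⊤` if infinite). -/
noncomputable def palWidth (S : Set W) : ℕ∞ :=
  sInf {n : ℕ∞ | ∃ m : ℕ, n = (m : ℕ∞) ∧ ∀ g : W, ProdOfPal S m g}

/-- The word length of `g` with respect to `S`. -/
noncomputable def wordLength (S : Set W) (g : W) : ℕ :=
  sInf {n : ℕ | ∃ l : List W, l.length = n ∧ (∀ x ∈ l, x ∈ S ∪ S⁻¹) ∧ l.prod = g}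

end Palindromes
/-- If `G` is a non-abelian group generated by a finite set `X` with finite
palindromic width with respect to `X`, then after possibly adding one element `c` to the
generating set, `G` admits a relation (a word over `X ∪ {c}` whose product is `1`) whose
reverse word is nontrivial in `G`. -/
theorem exists_relation_with_nontrivial_reverse {G : Type*} [Group G] (X : Finset G)
    (hX : Subgroup.closure (X : Set G) = ⊤)
    (hna : ∃ a b : G, a * b ≠ b * a)
    (hpw : palWidth (X : Set G) ≠ ⊤) :
    ∃ c : G, ∃ l : List G,
      (∀ x ∈ l, x ∈ ((X : Set G) ∪ {c}) ∪ ((X : Set G) ∪ {c})⁻¹) ∧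
      l.prod = 1 ∧ l.reverse.prod ≠ 1 := by
  by_contra hcon
  push_neg at hcon
  -- Every element has a word over X
  have hword : ∀ g : G, ∃ u : List G,
      (∀ x ∈ u, x ∈ (X : Set G) ∪ (X : Set G)⁻¹) ∧ u.prod = g := by
    intro g
    have hg : g ∈ Submonoid.closure ((X : Set G) ∪ (X : Set G)⁻¹) := by
      rw [← Subgroup.closure_toSubmonoid, hX]
      trivial
    exact Submonoid.exists_list_of_mem_closure hg
  -- membership transfer
  have hmem : ∀ (c : G) (u : List G), (∀ x ∈ u, x ∈ (X : Set G) ∪ (X : Set G)⁻¹) →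
      ∀ x ∈ u, x ∈ ((X : Set G) ∪ {c}) ∪ ((X : Set G) ∪ {c})⁻¹ := by
    intro c u hu x hx
    rcases hu x hx with h | h
    · exact Or.inl (Or.inl h)
    · refine Or.inr ?_
      rw [Set.mem_inv] at h ⊢
      exact Or.inl h
  -- reversing a word for g gives g again
  have hrev : ∀ (g : G) (u : List G), (∀ x ∈ u, x ∈ (X : Set G) ∪ (X : Set G)⁻¹) →
      u.prod = g → u.reverse.prod = g := by
    intro g u hu hp
    have hmem' : ∀ x ∈ u ++ [g⁻¹],
        x ∈ ((X : Set G) ∪ {g}) ∪ ((X : Set G) ∪ {g})⁻¹ := by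
      intro x hx
      rcases List.mem_append.mp hx with hx | hx
      · exact hmem g u hu x hx
      · simp only [List.mem_singleton] at hx
        subst hx
        refine Or.inr ?_
        rw [Set.mem_inv]
        simp
    have hp1 : (u ++ [g⁻¹]).prod = 1 := by
      simp [List.prod_append, hp]
    have := hcon g (u ++ [g⁻¹]) hmem' hp1
    simp only [List.reverse_append, List.reverse_singleton, List.prod_append,
      List.prod_cons, List.prod_nil, List.singleton_append] at this
    exact (inv_mul_eq_one.mp this).symm
  -- now show G is abelian
  obtain ⟨a, b, hab⟩ := hna
  obtain ⟨u, hu, hup⟩ := hword a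
  obtain ⟨v, hv, hvp⟩ := hword b
  have huv : ∀ x ∈ u ++ v ++ [(a * b)⁻¹],
      x ∈ ((X : Set G) ∪ {a * b}) ∪ ((X : Set G) ∪ {a * b})⁻¹ := by
    intro x hx
    rcases List.mem_append.mp hx with hx | hx
    · rcases List.mem_append.mp hx with hx | hx
      · exact hmem _ u hu x hx
      · exact hmem _ v hv x hx
    · simp only [List.mem_singleton] at hx
      subst hx
      refine Or.inr ?_
      rw [Set.mem_inv]
      simp
    
  have hp1 : (u ++ v ++ [(a * b)⁻¹]).prod = 1 := by
    simp [List.prod_append, hup, hvp]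
  have key := hcon (a * b) (u ++ v ++ [(a * b)⁻¹]) huv hp1
  have hur : u.reverse.prod = a := hrev a u hu hup
  have hvr : v.reverse.prod = b := hrev b v hv hvp
  simp only [List.reverse_append, List.reverse_singleton, List.prod_append,
    List.prod_cons, List.prod_nil, List.singleton_append, mul_one, hur, hvr] at key
  exact hab (inv_mul_eq_one.mp key)
end

section
/- Let F_d be the free group of rank d with free generating set Y, and let G be a non-abelian finitely generated group with finite palindromic width m = pw(G, X) with respect to a finite generating set X. Then there exists c ∈ G (possibly c = 1) such that every element of the subgroup F_d' ≀ G of the restricted regular wreath product F_d ≀ G — namely the subgroup consisting of all pairs (f, a) where a ∈ G and f : G → F_d is a finitely supported function taking values in the derived subgroup [F_d, F_d] — is a product of at most m + 1 palindromes with respect to the generating set of F_d ≀ G consisting of the canonical copies of X ∪ {c} and of Y. -/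
open Function

/-!
Choose non-commuting `x, y ∈ X` and put `c = x * y`. The word `x⁻¹ y⁻¹ (x y)` multiplies to
`n = ⁅x⁻¹, y⁻¹⁆ ≠ 1`, while its reverse `(x y) y⁻¹ x⁻¹` multiplies to `1`. The products of words
whose reverse multiplies to `1` are palindromes (`D ++ D.reverse`) and form a subgroup `K`, normal
as soon as the alphabet generates. In `F_d ≀ G`, conjugation by `n` moves the support of a base
element `a` at `1` to `n`, so `⁅⁅n, a⁆, b⁆` is `⁅a⁻¹, b⁆` at `1`; conjugating by `G`, `K` contains
every base element with values in `F_d'`. So the base part of `w` is a single palindrome, and its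
`G`-part is a product of `m` palindromes over `X`.
-/

open MulOpposite SemidirectProduct Subgroup
open scoped commutatorElement

section PalindromeCalculus

variable {W W' : Type*} [Group W] [Group W'] {S : Set W}

lemma IsPalindrome.map {S' : Set W'} (φ : W →* W') (hφ : Set.MapsTo φ S S') {g : W}
    (hg : IsPalindrome S g) : IsPalindrome S' (φ g) := by
  obtain ⟨l, hl, hrev, rfl⟩ := hg
  refine ⟨l.map φ, ?_, by rw [← List.map_reverse, hrev], (map_list_prod φ l).symm⟩
  simp only [List.mem_map]
  rintro _ ⟨x, hx, rfl⟩
  rcases hl x hx with hx | hx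
  · exact Or.inl (hφ hx)
  · exact Or.inr (by simpa only [Set.mem_inv, ← map_inv] using hφ (Set.mem_inv.mp hx))

lemma ProdOfPal.map {S' : Set W'} (φ : W →* W') (hφ : Set.MapsTo φ S S') {n : ℕ} {g : W}
    (hg : ProdOfPal S n g) : ProdOfPal S' n (φ g) := by
  obtain ⟨l, hlen, hl, rfl⟩ := hg
  refine ⟨l.map φ, by simpa using hlen, ?_, (map_list_prod φ l).symm⟩
  simp only [List.mem_map]
  rintro _ ⟨p, hp, rfl⟩
  exact (hl p hp).map φ hφ

lemma ProdOfPal.palindrome_mul {n : ℕ} {p g : W} (hp : IsPalindrome S p) (hg : ProdOfPal S n g) :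
    ProdOfPal S (n + 1) (p * g) := by
  obtain ⟨l, hlen, hl, rfl⟩ := hg
  refine ⟨p :: l, by simpa using hlen, ?_, List.prod_cons⟩
  simp only [List.mem_cons, forall_eq_or_imp]
  exact ⟨hp, hl⟩

lemma prodOfPal_of_palWidth_eq {m : ℕ} (hm : palWidth S = m) (g : W) : ProdOfPal S m g := by
  set T := {n : ℕ∞ | ∃ k : ℕ, n = k ∧ ∀ g : W, ProdOfPal S k g}
  have hm' : sInf T = m := hm
  have hT : T.Nonempty := by
    refine Set.nonempty_iff_ne_empty.mpr fun hT => ENat.top_ne_natCast m ?_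
    rw [← hm', hT, sInf_empty]
  obtain ⟨k, hk, hkS⟩ : sInf T ∈ T := csInf_mem hT
  have hkm : k = m := by exact_mod_cast hk.symm.trans hm'
  exact hkm ▸ hkS g

/-- `(u, op v)` lies in `reversePairs S` iff `u` is the product of a word over `S ∪ S⁻¹` and
`v` the product of the reversed word. -/
def reversePairs (S : Set W) : Subgroup (W × Wᵐᵒᵖ) :=
  closure ((fun s => (s, op s)) '' S)

def reverseKernel (S : Set W) : Subgroup W :=
  (reversePairs S).comap (MonoidHom.inl W Wᵐᵒᵖ)

lemma isPalindrome_mul_of_mem_reversePairs {u v : W} (h : (u, op v) ∈ reversePairs S) :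
    IsPalindrome S (u * v) := by
  rw [reversePairs, ← mem_toSubmonoid, closure_toSubmonoid] at h
  obtain ⟨l, hl, hprod⟩ := Submonoid.exists_list_of_mem_closure h
  have hdiag : ∀ p ∈ l, p.1 ∈ S ∪ S⁻¹ ∧ p.2 = op p.1 := by
    intro p hp
    rcases hl p hp with ⟨s, hs, rfl⟩ | hinv
    · exact ⟨Or.inl hs, rfl⟩
    · obtain ⟨s, hs, hps⟩ := Set.mem_inv.mp hinv
      rw [← inv_inv p, ← hps]
      exact ⟨Or.inr (by simpa using hs), by simp⟩
  set D := l.map Prod.fst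
  have hu : D.prod = u := by
    simpa [D] using (map_list_prod (MonoidHom.fst W Wᵐᵒᵖ) l).symm.trans (congrArg Prod.fst hprod)
  have hv : D.reverse.prod = v := by
    apply MulOpposite.op_injective
    rw [op_list_prod, List.map_reverse, List.reverse_reverse, List.map_map,
      ← List.map_congr_left (g := op ∘ Prod.fst) fun p hp => (hdiag p hp).2]
    simpa using (map_list_prod (MonoidHom.snd W Wᵐᵒᵖ) l).symm.trans (congrArg Prod.snd hprod)
  refine ⟨D ++ D.reverse, ?_, by simp, by rw [List.prod_append, hu, hv]⟩
  simp only [List.mem_append, List.mem_reverse, or_self, D, List.mem_map]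
  rintro _ ⟨p, hp, rfl⟩
  exact (hdiag p hp).1

lemma isPalindrome_of_mem_reverseKernel {u : W} (h : u ∈ reverseKernel S) :
    IsPalindrome S u := by
  simpa using isPalindrome_mul_of_mem_reversePairs (v := 1) h

lemma reverseKernel_normal (hS : closure S = ⊤) : (reverseKernel S).Normal := by
  refine ⟨fun u hu g => ?_⟩
  have hfst : closure S ≤ (reversePairs S).map (MonoidHom.fst _ _) :=
    closure_le _ |>.mpr fun s hs => ⟨(s, op s), subset_closure ⟨s, hs, rfl⟩, rfl⟩
  obtain ⟨p, hp, rfl⟩ := hfst (hS ▸ mem_top g)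
  show MonoidHom.inl W Wᵐᵒᵖ (p.1 * u * p.1⁻¹) ∈ reversePairs S
  convert mul_mem (mul_mem hp hu) (inv_mem hp) using 1
  ext <;> simp

lemma commutatorElement_inv_inv_mem_reverseKernel {x y : W} (hx : x ∈ S) (hy : y ∈ S)
    (hxy : x * y ∈ S) : ⁅x⁻¹, y⁻¹⁆ ∈ reverseKernel S := by
  have hmem : ∀ s ∈ S, (s, op s) ∈ reversePairs S := fun s hs => subset_closure ⟨s, hs, rfl⟩
  show MonoidHom.inl W Wᵐᵒᵖ ⁅x⁻¹, y⁻¹⁆ ∈ reversePairs S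
  convert mul_mem (mul_mem (inv_mem (hmem x hx)) (inv_mem (hmem y hy))) (hmem _ hxy) using 1
  ext
  · simp [commutatorElement_def, mul_assoc]
  · apply MulOpposite.unop_injective
    simp [commutatorElement_def, mul_assoc]

lemma exists_mem_not_commute_of_closure_eq_top {X : Set W} (hX : closure X = ⊤)
    (hna : ∃ a b : W, a * b ≠ b * a) : ∃ x ∈ X, ∃ y ∈ X, x * y ≠ y * x := by
  by_contra! hcomm
  obtain ⟨a, b, hab⟩ := hna
  have hcent := closure_le_centralizer_centralizer X
  exact hab (Set.centralizer_centralizer_comm_of_comm hcomm _ (hcent (hX ▸ mem_top a)) _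
    (hcent (hX ▸ mem_top b)))

end PalindromeCalculus

section WreathGeneration

variable {Γ A : Type*} [Group Γ] [Group A]

lemma coe_atOne [DecidableEq A] (g : Γ) :
    ((atOne g : restrictedBase Γ A) : A → Γ) = Pi.mulSingle 1 g := by
  ext x
  simp [atOne, Pi.mulSingle_apply]

lemma coe_wreathAction_atOne [DecidableEq A] (a : A) (g : Γ) :
    ((wreathAction Γ A a (atOne g) : restrictedBase Γ A) : A → Γ) = Pi.mulSingle a g := by
  ext x
  show ((atOne g : restrictedBase Γ A) : A → Γ) (a⁻¹ * x) = _
  simp [coe_atOne, Pi.mulSingle_apply, inv_mul_eq_one, eq_comm]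

noncomputable def atOneHom : Γ →* restrictedBase Γ A where
  toFun := atOne
  map_one' := by classical exact Subtype.ext (by simp [coe_atOne])
  map_mul' g h := by classical exact Subtype.ext (by simp [coe_atOne, Pi.mulSingle_mul])

lemma mem_of_apply_mem_of_mulSingle_mem {H : Subgroup (restrictedBase Γ A)} {N : Subgroup Γ}
    (hH : ∀ a, ∀ v ∈ N, wreathAction Γ A a (atOne v) ∈ H) (f : restrictedBase Γ A)
    (hf : ∀ x, (f : A → Γ) x ∈ N) : f ∈ H := by
  classical
  suffices ∀ s : Finset A, ∀ f : restrictedBase Γ A, mulSupport (f : A → Γ) ⊆ s →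
      (∀ x, (f : A → Γ) x ∈ N) → f ∈ H from
    this f.2.toFinset f (Set.Finite.coe_toFinset f.2).symm.subset hf
  intro s
  induction s using Finset.induction_on with
  | empty =>
    intro f hs _
    have hf1 : f = 1 := Subtype.ext (mulSupport_eq_empty_iff.mp (by simpa using hs))
    exact hf1 ▸ one_mem H
  | insert a s _ ih =>
    intro f hs hf
    set g := wreathAction Γ A a (atOne ((f : A → Γ) a))
    have hg : ((g⁻¹ * f : restrictedBase Γ A) : A → Γ) = update f a 1 := by
      ext x
      rcases eq_or_ne x a with rfl | hx
      · simp [g, coe_wreathAction_atOne]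
      · simp [g, coe_wreathAction_atOne, hx]
    rw [← mul_inv_cancel_left g f]
    refine mul_mem (hH a _ (hf a)) (ih _ ?_ fun x => ?_)
    · rw [hg, mulSupport_update_one]
      intro x hx
      exact (Finset.mem_insert.mp (hs hx.1)).resolve_left hx.2
    · rw [hg, update_apply]
      split_ifs
      exacts [one_mem N, hf x]

lemma closure_wreathGens_eq_top {XB : Set Γ} {XA : Set A} (hB : closure XB = ⊤)
    (hA : closure XA = ⊤) : closure (wreathGens XB XA) = ⊤ := by
  set C := closure (wreathGens XB XA)
  have hinr : ∀ a, (inr a : Wreath Γ A) ∈ C := by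
    have : closure XA ≤ C.comap inr :=
      closure_le _ |>.mpr fun a ha => subset_closure (Or.inr ⟨a, ha, rfl⟩)
    exact fun a => this (hA ▸ mem_top a)
  have hinl : ∀ g, (inl (atOne g) : Wreath Γ A) ∈ C := by
    have : closure XB ≤ C.comap (inl.comp atOneHom) :=
      closure_le _ |>.mpr fun g hg => subset_closure (Or.inl ⟨g, hg, rfl⟩)
    exact fun g => this (hB ▸ mem_top g)
  have hbase : ∀ f, (inl f : Wreath Γ A) ∈ C := fun f =>
    mem_of_apply_mem_of_mulSingle_mem (H := C.comap inl) (N := ⊤)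
      (fun a v _ => by
        rw [mem_comap, inl_aut]
        exact mul_mem (mul_mem (hinr a) (hinl v)) (hinr a⁻¹))
      f fun _ => mem_top _
  exact (eq_top_iff' C).mpr fun w => inl_left_mul_inr_right w ▸ mul_mem (hbase _) (hinr _)

lemma commutatorElement_commutatorElement_inr_inl {n : A} (hn : n ≠ 1) (a b : Γ) :
    ⁅⁅(inr n : Wreath Γ A), (inl (atOne a) : Wreath Γ A)⁆, (inl (atOne b) : Wreath Γ A)⁆ =
      inl (atOne ⁅a⁻¹, b⁆) := by
  classical
  have hcomm : ⁅(inr n : Wreath Γ A), (inl (atOne a) : Wreath Γ A)⁆ =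
      inl (wreathAction Γ A n (atOne a) * (atOne a)⁻¹) := by
    rw [commutatorElement_def, map_mul, inl_aut, map_inv, map_inv]
  rw [hcomm, ← map_commutatorElement]
  congr 1
  ext x
  simp only [commutatorElement_def, Subgroup.coe_mul, Subgroup.coe_inv, Pi.mul_apply,
    Pi.inv_apply, coe_wreathAction_atOne, coe_atOne, Pi.mulSingle_apply]
  split_ifs <;> simp_all

lemma inl_mem_reverseKernel_wreathGens {XB : Set Γ} {XA : Set A} (hB : closure XB = ⊤)
    (hA : closure XA = ⊤) {n : A} (hn : n ≠ 1)
    (hnK : inr n ∈ reverseKernel (wreathGens XB XA)) (f : restrictedBase Γ A)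
    (hf : ∀ x, (f : A → Γ) x ∈ commutator Γ) : inl f ∈ reverseKernel (wreathGens XB XA) := by
  set K := reverseKernel (wreathGens XB XA)
  have hK : K.Normal := reverseKernel_normal (closure_wreathGens_eq_top hB hA)
  have hcomm : ∀ u ∈ K, ∀ g, ⁅u, g⁆ ∈ K := fun u hu g =>
    commutator_le_left K ⊤ (commutator_mem_commutator hu (mem_top g))
  have hsingle : commutator Γ ≤ K.comap (inl.comp atOneHom) := by
    rw [commutator_def, commutator_le]
    intro a _ b _
    have := hcomm _ (hcomm _ hnK (inl (atOne a⁻¹))) (inl (atOne b))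
    rwa [commutatorElement_commutatorElement_inr_inl hn, inv_inv] at this
  refine mem_of_apply_mem_of_mulSingle_mem (H := K.comap inl) (N := commutator Γ)
    (fun a v hv => ?_) f hf
  rw [mem_comap, inl_aut, map_inv]
  exact hK.conj_mem _ (hsingle hv) (inr a)

end WreathGeneration

/-- Let `F_d` be the free group of rank `d` and `G` a non-abelian finitely
generated group with palindromic width `m = pw(G, X)` for a finite generating set `X`.
Then there is `c ∈ G` (possibly `c = 1`) such that every element of `F_d' ≀ G` — i.e.
every element `w` of `F_d ≀ G` whose base component takes values in `[F_d, F_d]` — is a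
product of at most `m + 1` palindromes with respect to the canonical copies of `X ∪ {c}`
and of the free generating set of `F_d`. -/
theorem derived_free_wreath_palindromes {G : Type*} [Group G] (d : ℕ)
    (X : Finset G) (hX : Subgroup.closure (X : Set G) = ⊤)
    (hna : ∃ a b : G, a * b ≠ b * a)
    (m : ℕ) (hm : palWidth (X : Set G) = (m : ℕ∞)) :
    ∃ c : G, ∀ w : Wreath (FreeGroup (Fin d)) G,
      (∀ a : G, (w.left : G → FreeGroup (Fin d)) a ∈ commutator (FreeGroup (Fin d))) →
      ProdOfPal
        (wreathGens (Set.range (FreeGroup.of : Fin d → FreeGroup (Fin d)))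
          ((X : Set G) ∪ {c}))
        (m + 1) w := by
  obtain ⟨x, hx, y, hy, hxy⟩ := exists_mem_not_commute_of_closure_eq_top hX hna
  refine ⟨x * y, fun w hw => ?_⟩
  set S := wreathGens (Set.range (FreeGroup.of : Fin d → FreeGroup (Fin d)))
    ((X : Set G) ∪ {x * y})
  have hinrS : ∀ g ∈ (X : Set G) ∪ {x * y}, (inr g : Wreath (FreeGroup (Fin d)) G) ∈ S :=
    fun g hg => Or.inr ⟨g, hg, rfl⟩
  have hn : inr ⁅x⁻¹, y⁻¹⁆ ∈ reverseKernel S := by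
    rw [map_commutatorElement, map_inv, map_inv]
    refine commutatorElement_inv_inv_mem_reverseKernel (hinrS x (Or.inl hx))
      (hinrS y (Or.inl hy)) ?_
    rw [← map_mul]
    exact hinrS _ (Or.inr rfl)
  have hn1 : ⁅x⁻¹, y⁻¹⁆ ≠ 1 := by
    rwa [Ne, commutatorElement_eq_one_iff_commute, Commute.inv_inv_iff]
  have hXc : closure ((X : Set G) ∪ {x * y}) = ⊤ :=
    eq_top_mono (closure_mono Set.subset_union_left) hX
  have hbase := isPalindrome_of_mem_reverseKernel
    (inl_mem_reverseKernel_wreathGens (FreeGroup.closure_range_of _) hXc hn1 hn w.left hw)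
  rw [← inl_left_mul_inr_right w]
  exact ((prodOfPal_of_palWidth_eq hm w.right).map inr
    fun g hg => hinrS g (Or.inl hg)).palindrome_mul hbase
end
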